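/- Let D = conv{0, e₁, e₂, e₁+e₂, e₃} ⊆ ℝ³ be the quadrangular pyramid over the unit square conv{0, e₁, e₂, e₁+e₂} with apex e₃, and let Λ' be a full-rank lattice in ℝ³ containing ℤ³ such that for any two distinct vectors s, t ∈ Λ' the interiors of D + s and D + t are disjoint. Then Λ' = ℤ³. -/

import Mathlib

/-!
Modulo `ℤ³ ⊆ Λ'`, every `v ∈ Λ'` is congruent to some `u ∈ Λ'` with `z, x + z, y + z ∈ [0, 1)`.
For such `u` the interiors of `D` and `u + D` meet: just above height `u₃`, the horizontal
slices of both pyramids are overlapping squares. The packing condition then forces `u = 0`,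
so `v ∈ ℤ³`.
-/

open Pointwise MeasureTheory

/-- The standard basis vector `eᵢ` of `ℝ³`. -/
noncomputable def stdVec (i : Fin 3) : EuclideanSpace ℝ (Fin 3) :=
  EuclideanSpace.single i (1 : ℝ)

/-- The quadrangular pyramid `conv {0, e₁, e₂, e₁+e₂, e₃} ⊆ ℝ³` over the unit square
`conv {0, e₁, e₂, e₁+e₂}` with apex `e₃`. -/
noncomputable def stdPyramid : Set (EuclideanSpace ℝ (Fin 3)) :=
  convexHull ℝ {0, stdVec 0, stdVec 1, stdVec 0 + stdVec 1, stdVec 2}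

/-- The standard integer lattice `ℤ³ ⊆ ℝ³`, i.e. the `ℤ`-span of the standard basis. -/
noncomputable def intLattice : Submodule ℤ (EuclideanSpace ℝ (Fin 3)) :=
  Submodule.span ℤ (Set.range stdVec)

local notation "ℝ³" => EuclideanSpace ℝ (Fin 3)

lemma stdVec_apply (i j : Fin 3) : stdVec i j = if j = i then 1 else 0 :=
  PiLp.single_apply 2 ℝ i 1 j

lemma smul_stdVec_add_apply (x : Fin 3 → ℝ) (i : Fin 3) :
    (x 0 • stdVec 0 + x 1 • stdVec 1 + x 2 • stdVec 2) i = x i := by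
  fin_cases i <;> simp [stdVec_apply]

lemma eq_coord_smul_stdVec (p : ℝ³) :
    p = p 0 • stdVec 0 + p 1 • stdVec 1 + p 2 • stdVec 2 :=
  PiLp.ext fun i => (smul_stdVec_add_apply p i).symm

lemma mem_stdPyramid {p : ℝ³} (h0 : 0 ≤ p 0) (h1 : 0 ≤ p 1) (h2 : 0 ≤ p 2)
    (h02 : p 0 + p 2 ≤ 1) (h12 : p 1 + p 2 ≤ 1) : p ∈ stdPyramid := by
  -- the weight of the vertex `e₁ + e₂`, chosen so that all five weights are nonnegative
  set t := max 0 (p 0 + p 1 + p 2 - 1)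
  have ht₀ : 0 ≤ t := le_max_left _ _
  have ht₁ : t ≤ p 0 := max_le h0 (by linarith)
  have ht₂ : t ≤ p 1 := max_le h1 (by linarith)
  have ht₃ : p 0 + p 1 + p 2 - 1 ≤ t := le_max_right _ _
  have hmem : _ ∈ stdPyramid := (convex_convexHull ℝ _).sum_mem (t := Finset.univ)
    (w := ![1 - p 0 - p 1 - p 2 + t, p 0 - t, p 1 - t, t, p 2])
    (z := ![0, stdVec 0, stdVec 1, stdVec 0 + stdVec 1, stdVec 2])
    (fun i _ => by fin_cases i <;> simp <;> linarith)
    (by simp [Fin.sum_univ_five]; ring)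
    (fun i _ => subset_convexHull ℝ _ (by fin_cases i <;> simp))
  convert hmem using 1
  refine (eq_coord_smul_stdVec p).trans ?_
  simp only [Fin.sum_univ_five, Matrix.cons_val]
  module

lemma mem_interior_stdPyramid {p : ℝ³} (h0 : 0 < p 0) (h1 : 0 < p 1) (h2 : 0 < p 2)
    (h02 : p 0 + p 2 < 1) (h12 : p 1 + p 2 < 1) : p ∈ interior stdPyramid := by
  have hcont (i : Fin 3) : Continuous fun q : ℝ³ => q i := (EuclideanSpace.proj i).continuous
  let U : Set ℝ³ := {q | 0 < q 0 ∧ 0 < q 1 ∧ 0 < q 2 ∧ q 0 + q 2 < 1 ∧ q 1 + q 2 < 1}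
  have hU : IsOpen U := by
    simp only [U, Set.ofPred_and]
    refine (isOpen_lt continuous_const (hcont 0)).inter <| (isOpen_lt continuous_const
      (hcont 1)).inter <| (isOpen_lt continuous_const (hcont 2)).inter <|
      (isOpen_lt ((hcont 0).add (hcont 2)) continuous_const).inter
      (isOpen_lt ((hcont 1).add (hcont 2)) continuous_const)
  refine interior_maximal (fun q hq => ?_) hU ⟨h0, h1, h2, h02, h12⟩
  obtain ⟨hq0, hq1, hq2, hq02, hq12⟩ := hq
  exact mem_stdPyramid hq0.le hq1.le hq2.le hq02.le hq12.le

/-- The unit cube `[0, 1)³` in the unimodular coordinates `(x + z, y + z, z)`, hence a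
fundamental domain of `ℤ³`. -/
def shearedUnitCube : Set ℝ³ :=
  {u | u 2 ∈ Set.Ico 0 1 ∧ u 0 + u 2 ∈ Set.Ico 0 1 ∧ u 1 + u 2 ∈ Set.Ico 0 1}

lemma intCast_smul_stdVec_mem_intLattice (n : ℤ) (i : Fin 3) :
    (n : ℝ) • stdVec i ∈ intLattice := by
  rw [Int.cast_smul_eq_zsmul]
  exact intLattice.smul_mem n (Submodule.subset_span ⟨i, rfl⟩)

lemma exists_sub_mem_shearedUnitCube (v : ℝ³) :
    ∃ m ∈ intLattice, v - m ∈ shearedUnitCube := by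
  set c := Int.fract (v 2)
  set n : Fin 3 → ℝ := ![⌊v 0 + c⌋, ⌊v 1 + c⌋, ⌊v 2⌋]
  refine ⟨n 0 • stdVec 0 + n 1 • stdVec 1 + n 2 • stdVec 2,
    add_mem (add_mem (intCast_smul_stdVec_mem_intLattice _ _)
      (intCast_smul_stdVec_mem_intLattice _ _)) (intCast_smul_stdVec_mem_intLattice _ _), ?_⟩
  have hcoord (i : Fin 3) :
      (v - (n 0 • stdVec 0 + n 1 • stdVec 1 + n 2 • stdVec 2)) i = v i - n i := by
    rw [PiLp.sub_apply, smul_stdVec_add_apply]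
  have hfract (i : Fin 3) : v i - ⌊v i + c⌋ + c = Int.fract (v i + c) := by
    rw [← Int.self_sub_floor]; ring
  have hIco (a : ℝ) : Int.fract a ∈ Set.Ico 0 1 := ⟨Int.fract_nonneg a, Int.fract_lt_one a⟩
  simp only [shearedUnitCube, Set.mem_ofPred_eq, hcoord]
  simp only [n, Matrix.cons_val, Int.self_sub_floor]
  rw [hfract, hfract]
  exact ⟨hIco _, hIco _, hIco _⟩

lemma not_disjoint_interior_stdPyramid_vadd {u : ℝ³} (hu : u ∈ shearedUnitCube) :
    ¬Disjoint (interior stdPyramid) (interior (u +ᵥ stdPyramid)) := by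
  obtain ⟨⟨hc₀, hc₁⟩, ⟨ha₀, ha₁⟩, ⟨hb₀, hb₁⟩⟩ := hu
  set M := max (u 2) (max (u 0 + u 2) (u 1 + u 2))
  have hM : M < 1 := max_lt hc₁ (max_lt ha₁ hb₁)
  have hM₀ : max 0 (u 0) + u 2 ≤ M := by
    rw [← max_add_add_right, zero_add]; exact max_le_max_left _ (le_max_left _ _)
  have hM₁ : max 0 (u 1) + u 2 ≤ M := by
    rw [← max_add_add_right, zero_add]; exact max_le_max_left _ (le_max_right _ _)
  set ε := (1 - M) / 3 with hε
  have h₀ : max 0 (u 0) ≤ u 0 + u 2 := max_le (by linarith) (by linarith)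
  have h₁ : max 0 (u 1) ≤ u 1 + u 2 := max_le (by linarith) (by linarith)
  set p : ℝ³ := !₂[max 0 (u 0) + ε, max 0 (u 1) + ε, u 2 + ε]
  have hp : p ∈ interior stdPyramid := by
    apply mem_interior_stdPyramid <;> simp [p] <;>
      linarith [le_max_left 0 (u 0), le_max_left 0 (u 1)]
  have hpu : -u + p ∈ interior stdPyramid := by
    apply mem_interior_stdPyramid <;> simp [p] <;>
      linarith [le_max_right 0 (u 0), le_max_right 0 (u 1)]
  rw [interior_vadd, Set.not_disjoint_iff]
  exact ⟨p, hp, Set.mem_vadd_set_iff_neg_vadd_mem.mpr hpu⟩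

theorem stmt_14_general (Λ' : Submodule ℤ (EuclideanSpace ℝ (Fin 3)))
    (hle : intLattice ≤ Λ')
    (h : ∀ s ∈ Λ', ∀ t ∈ Λ', s ≠ t →
      Disjoint (interior (s +ᵥ stdPyramid)) (interior (t +ᵥ stdPyramid))) :
    Λ' = intLattice := by
  refine le_antisymm (fun v hv => ?_) hle
  obtain ⟨m, hm, hvm⟩ := exists_sub_mem_shearedUnitCube v
  have hvm_zero : v - m = 0 := by
    by_contra hne
    have hdisj := h 0 Λ'.zero_mem (v - m) (Λ'.sub_mem hv (hle hm)) (Ne.symm hne)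
    rw [zero_vadd] at hdisj
    exact not_disjoint_interior_stdPyramid_vadd hvm hdisj
  rwa [sub_eq_zero.mp hvm_zero]

/-- If `Λ'` is a full-rank lattice in `ℝ³` containing `ℤ³` such that the translates of the
quadrangular pyramid `D` by the vectors of `Λ'` have pairwise disjoint interiors,
then `Λ' = ℤ³`. -/
theorem stmt_14 (Λ' : Submodule ℤ (EuclideanSpace ℝ (Fin 3)))
    [DiscreteTopology Λ'] [IsZLattice ℝ Λ']
    (hle : intLattice ≤ Λ')
    (h : ∀ s ∈ Λ', ∀ t ∈ Λ', s ≠ t →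
      Disjoint (interior (s +ᵥ stdPyramid)) (interior (t +ᵥ stdPyramid))) :
    Λ' = intLattice :=
  stmt_14_general Λ' hle h
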